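/- arXiv:1110.5166 — 2 statements merged into one kernel-verified Lean document; each statement's English description precedes it below -/
import Mathlib

section
/- Let B be a basis in a binary matroid M, let x and y be distinct elements not in B, and suppose b ∈ C(x,B) ∩ C(y,B). Then, with B_{b,x} := B - b + x (which is a basis), one has C(y, B_{b,x}) = C(x,B) △ C(y,B). -/
/-!
Since `b` lies in both circuits, `Cx ∆ Cy ⊆ insert y (B - b + x)`, and the binary property puts the
unique circuit `Cy'` of that set inside `Cx ∆ Cy`. Applying the binary property to `Cy, Cy'` and to
`Cx, Cy'` gives circuits inside `insert x B` and `insert y B`, that is `Cx ⊆ Cy ∆ Cy'` and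
`Cy ⊆ Cx ∆ Cy'`, which together force `Cx ∆ Cy ⊆ Cy'`.
-/

open Set

variable {α : Type*}

/-- A circuit: a minimal dependent set. -/
def IsCircuit (M : Matroid α) (C : Set α) : Prop :=
  M.Dep C ∧ ∀ D, D ⊂ C → M.Indep D

/-- `C` is the fundamental circuit of `x` with respect to the basis `B`:
the unique circuit contained in `B ∪ {x}`. -/
def IsFundCct (M : Matroid α) (C : Set α) (x : α) (B : Set α) : Prop :=
  IsCircuit M C ∧ x ∈ C ∧ C ⊆ insert x B

/-- `SymEx M a A B` : the elements `b ∈ B` such that `A - a + b` and `B - b + a` are bases. -/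
def SymEx (M : Matroid α) (a : α) (A B : Set α) : Set α :=
  {b ∈ B | M.IsBase (insert b (A \ {a})) ∧ M.IsBase (insert a (B \ {b}))}

/-- `ConnEx M a a' A B` : the elements `b ∈ B` such that `A - a' + b` and `B - b + a` are bases. -/
def ConnEx (M : Matroid α) (a a' : α) (A B : Set α) : Set α :=
  {b ∈ B | M.IsBase (insert b (A \ {a'})) ∧ M.IsBase (insert a (B \ {b}))}

/-- A binary matroid, via the circuit characterization: the symmetric difference of
any two distinct circuits contains a circuit. -/
def Binary (M : Matroid α) : Prop :=
  ∀ C₁ C₂, IsCircuit M C₁ → IsCircuit M C₂ → C₁ ≠ C₂ →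
    ∃ C, IsCircuit M C ∧ C ⊆ symmDiff C₁ C₂

/-- A hyperplane: a maximal proper flat. -/
def IsHyperplane (M : Matroid α) (H : Set α) : Prop :=
  M.IsFlat H ∧ H ≠ M.E ∧ ∀ F, M.IsFlat F → H ⊂ F → F = M.E

lemma isCircuit_iff_matroidIsCircuit {M : Matroid α} {C : Set α} :
    IsCircuit M C ↔ M.IsCircuit C := by
  rw [Matroid.isCircuit_iff_forall_ssubset]
  rfl

lemma IsCircuit.eq_of_subset_insert {M : Matroid α} {I C C' : Set α} {e : α} (hI : M.Indep I)
    (hC : IsCircuit M C) (hC' : IsCircuit M C') (hCs : C ⊆ insert e I)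
    (hC's : C' ⊆ insert e I) : C = C' :=
  (isCircuit_iff_matroidIsCircuit.1 hC |>.eq_fundCircuit_of_subset hI hCs).trans
    (isCircuit_iff_matroidIsCircuit.1 hC' |>.eq_fundCircuit_of_subset hI hC's).symm

lemma IsFundCct.exchange_isBase {M : Matroid α} {B C : Set α} {x b : α} (hB : M.IsBase B)
    (hC : IsFundCct M C x B) (hxB : x ∉ B) (hbC : b ∈ C) (hbB : b ∈ B) :
    M.IsBase (insert x (B \ {b})) := by
  obtain ⟨hCc, hxC, hCB⟩ := hC
  have hCc := isCircuit_iff_matroidIsCircuit.1 hCc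
  have hxE : x ∈ M.E := hCc.subset_ground hxC
  rw [hCc.eq_fundCircuit_of_subset hB.indep hCB,
    hB.indep.mem_fundCircuit_iff (by rwa [hB.closure_eq]) hxB] at hbC
  rw [← insert_sdiff_singleton_comm (ne_of_mem_of_not_mem hbB hxB).symm] at hbC
  exact hB.exchange_isBase_of_indep hxB hbC

lemma Binary.subset_symmDiff_of_subset_insert {M : Matroid α} (hM : Binary M)
    {I C C₁ C₂ : Set α} {e : α} (hI : M.Indep I) (hC : IsCircuit M C) (hCs : C ⊆ insert e I)
    (hC₁ : IsCircuit M C₁) (hC₂ : IsCircuit M C₂) (hne : C₁ ≠ C₂)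
    (hs : symmDiff C₁ C₂ ⊆ insert e I) : C ⊆ symmDiff C₁ C₂ := by
  obtain ⟨D, hD, hDs⟩ := hM C₁ C₂ hC₁ hC₂ hne
  rwa [← hD.eq_of_subset_insert hI hC (hDs.trans hs) hCs]

lemma symmDiff_subset_of_subset_symmDiff {A B C : Set α} (hA : A ⊆ symmDiff B C)
    (hB : B ⊆ symmDiff A C) : symmDiff A B ⊆ C := by
  grind

theorem stmt_13_general (M : Matroid α) {B Cx Cy : Set α} {x y b : α}
    (hM : Binary M) (hB : M.IsBase B) (hx : x ∉ B) (hy : y ∉ B) (hxy : x ≠ y)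
    (hCx : IsFundCct M Cx x B) (hCy : IsFundCct M Cy y B)
    (hbx : b ∈ Cx) (hby : b ∈ Cy) :
    M.IsBase (insert x (B \ {b})) ∧
      ∀ Cy', IsFundCct M Cy' y (insert x (B \ {b})) → Cy' = symmDiff Cx Cy := by
  have hxCy : x ∉ Cy := fun h ↦ (hCy.2.2 h).elim hxy hx
  have hyCx : y ∉ Cx := fun h ↦ (hCx.2.2 h).elim hxy.symm hy
  have hbB : b ∈ B := (hCx.2.2 hbx).resolve_left fun h ↦ hxCy (h ▸ hby)
  have hB' := hCx.exchange_isBase hB hx hbx hbB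
  refine ⟨hB', fun Cy' ⟨hCy'c, hyCy', hCy'B'⟩ ↦ ?_⟩
  obtain ⟨hCxc, hxCx, hCxB⟩ := hCx
  obtain ⟨hCyc, hyCy, hCyB⟩ := hCy
  have hbCy' : b ∉ Cy' := by grind
  have hxCy' : x ∈ Cy' := by
    by_contra hxCy'
    exact hbCy' (hCyc.eq_of_subset_insert hB.indep hCy'c hCyB (by grind) ▸ hby)
  have h₁ : Cy' ⊆ symmDiff Cx Cy :=
    hM.subset_symmDiff_of_subset_insert hB'.indep hCy'c hCy'B' hCxc hCyc
      (fun h ↦ hxCy (h ▸ hxCx)) (by grind)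
  have h₂ : Cx ⊆ symmDiff Cy Cy' :=
    hM.subset_symmDiff_of_subset_insert hB.indep hCxc hCxB hCyc hCy'c
      (fun h ↦ hbCy' (h ▸ hby)) (by grind)
  have h₃ : Cy ⊆ symmDiff Cx Cy' :=
    hM.subset_symmDiff_of_subset_insert hB.indep hCyc hCyB hCxc hCy'c
      (fun h ↦ hbCy' (h ▸ hbx)) (by grind)
  exact h₁.antisymm (symmDiff_subset_of_subset_symmDiff h₂ h₃)

theorem stmt_13 (M : Matroid α) [M.Finite] {B Cx Cy : Set α} {x y b : α}
    (hM : Binary M) (hB : M.IsBase B) (hx : x ∉ B) (hy : y ∉ B) (hxy : x ≠ y)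
    (hCx : IsFundCct M Cx x B) (hCy : IsFundCct M Cy y B)
    (hbx : b ∈ Cx) (hby : b ∈ Cy) :
    M.IsBase (insert x (B \ {b})) ∧
      ∀ Cy', IsFundCct M Cy' y (insert x (B \ {b})) → Cy' = symmDiff Cx Cy :=
  stmt_13_general M hM hB hx hy hxy hCx hCy hbx hby
end

section
/- A matroid M is binary if and only if for every basis B of M, every b ∈ B and x ∉ B such that B_{b,x} := B - b + x is a basis, and every y ∉ B with y ≠ x and b ∈ C(y,B), one has C(y, B_{b,x}) = C(x,B) △ C(y,B). -/
open Set

variable {α : Type*}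

/-!
Binary ⇒ exchange: with `B' = B - b + x`, the set `C(x,B) ∆ C(y,B)` lies in `B' ∪ {y}`, so in a
binary matroid it contains a circuit, which can only be `C(y,B')`. The same argument for the pairs
`(C(y,B'), C(y,B))` and `(C(x,B), C(y,B'))` gives two more inclusions, and the three together
force `C(y,B') = C(x,B) ∆ C(y,B)`.

Exchange ⇒ binary: read over GF(2), the exchange rule says that passing from `B` to `B'` acts on
the incidence vectors of fundamental circuits by a pivot step of Gaussian elimination. Induction on
`|C \ B|` then shows that every circuit `C` is the GF(2)-sum of the `C(y,B)` with `y ∈ C \ B`.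
If the symmetric difference of two distinct circuits `C₁, C₂` contained no circuit, it would extend
to a base `B` with `C₁ \ B = C₂ \ B`, and then `C₁ = C₂`.
-/

open scoped symmDiff

variable {M : Matroid α} {B C C₁ C₂ I : Set α} {b e u x y : α}

lemma isCircuit_iff_matroid_isCircuit : IsCircuit M C ↔ M.IsCircuit C := by
  rw [Matroid.isCircuit_iff_forall_ssubset, IsCircuit]

lemma binary_iff : Binary M ↔ ∀ C₁ C₂, M.IsCircuit C₁ → M.IsCircuit C₂ → C₁ ≠ C₂ →
    ∃ C, M.IsCircuit C ∧ C ⊆ C₁ ∆ C₂ := by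
  simp only [Binary, isCircuit_iff_matroid_isCircuit]

lemma IsFundCct.eq_fundCircuit (h : IsFundCct M C x I) (hI : M.Indep I) :
    C = M.fundCircuit x I :=
  (isCircuit_iff_matroid_isCircuit.1 h.1).eq_fundCircuit_of_subset hI h.2.2

lemma IsFundCct.mem_ground (h : IsFundCct M C x I) : x ∈ M.E :=
  h.1.1.subset_ground h.2.1

lemma Matroid.IsBase.isFundCct_fundCircuit (hB : M.IsBase B) (hx : x ∈ M.E \ B) :
    IsFundCct M (M.fundCircuit x B) x B :=
  ⟨isCircuit_iff_matroid_isCircuit.2 (hB.fundCircuit_isCircuit hx.1 hx.2),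
    M.mem_fundCircuit x B, M.fundCircuit_subset_insert x B⟩

lemma Matroid.IsBase.exchange_of_mem_fundCircuit (hB : M.IsBase B) (hu : u ∈ M.E \ B)
    (hbu : b ∈ M.fundCircuit u B) (hb : b ≠ u) : M.IsBase (insert u (B \ {b})) := by
  have hI := (hB.indep.mem_fundCircuit_iff (by rw [hB.closure_eq]; exact hu.1) hu.2).1 hbu
  rw [← insert_sdiff_singleton_comm hb.symm] at hI
  exact hB.exchange_isBase_of_indep hu.2 hI

lemma eq_symmDiff_of_subset_symmDiff {A X Y : Set α} (hA : A ⊆ X ∆ Y) (hX : X ⊆ A ∆ Y)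
    (hY : Y ⊆ X ∆ A) : A = X ∆ Y := by
  refine hA.antisymm fun a ha => ?_
  have := @hX a; have := @hY a
  simp only [mem_symmDiff] at *
  tauto

lemma Binary.fundCircuit_subset_symmDiff (hM : Binary M) (hI : M.Indep I)
    (hC₁ : M.IsCircuit C₁) (hC₂ : M.IsCircuit C₂) (hne : C₁ ≠ C₂) (hsub : C₁ ∆ C₂ ⊆ insert e I) :
    M.fundCircuit e I ⊆ C₁ ∆ C₂ := by
  obtain ⟨C, hC, hCsub⟩ := binary_iff.1 hM C₁ C₂ hC₁ hC₂ hne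
  rwa [← hC.eq_fundCircuit_of_subset hI (hCsub.trans hsub)]

def FundCircuitExchange (M : Matroid α) : Prop :=
  ∀ ⦃B : Set α⦄ ⦃b x y : α⦄, M.IsBase B → b ∈ B → x ∈ M.E \ B →
    M.IsBase (insert x (B \ {b})) → y ∈ M.E \ B → y ≠ x →
    b ∈ M.fundCircuit x B → b ∈ M.fundCircuit y B →
    M.fundCircuit y (insert x (B \ {b})) = M.fundCircuit x B ∆ M.fundCircuit y B

lemma Binary.fundCircuitExchange (hM : Binary M) : FundCircuitExchange M := by
  intro B b x y hB hbB hx hB' hy hyx hbx hby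
  set B' := insert x (B \ {b})
  set Cx := M.fundCircuit x B
  set Cy := M.fundCircuit y B
  set Cy' := M.fundCircuit y B'
  have hyB' : y ∉ B' := by simp [B', hyx, hy.2]
  have hCx := hB.fundCircuit_isCircuit hx.1 hx.2
  have hCy := hB.fundCircuit_isCircuit hy.1 hy.2
  have hCy' := hB'.fundCircuit_isCircuit hy.1 hyB'
  have hxCx : x ∈ Cx := M.mem_fundCircuit x B
  have hyCy : y ∈ Cy := M.mem_fundCircuit y B
  have hyCy' : y ∈ Cy' := M.mem_fundCircuit y B'
  have hCxB : ∀ a ∈ Cx, a = x ∨ a ∈ B := M.fundCircuit_subset_insert x B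
  have hCyB : ∀ a ∈ Cy, a = y ∨ a ∈ B := M.fundCircuit_subset_insert y B
  have hCy'B' : ∀ a ∈ Cy', a = y ∨ a = x ∨ a ∈ B ∧ a ≠ b := M.fundCircuit_subset_insert y B'
  have hbCy' : b ∉ Cy' := fun h => by grind
  have hxCy' : x ∈ Cy' := by
    by_contra hxCy'
    have hCy'Cy : Cy' = Cy :=
      hCy'.eq_fundCircuit_of_subset hB.indep fun a ha => by simp only [mem_insert_iff]; grind
    exact hbCy' (hCy'Cy ▸ hby)
  apply eq_symmDiff_of_subset_symmDiff
  · refine hM.fundCircuit_subset_symmDiff hB'.indep hCx hCy (by grind) fun a ha => ?_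
    simp only [mem_symmDiff, mem_insert_iff] at ha ⊢
    grind
  · refine hM.fundCircuit_subset_symmDiff hB.indep hCy' hCy (by grind) fun a ha => ?_
    simp only [mem_symmDiff, mem_insert_iff] at ha ⊢
    grind
  · refine hM.fundCircuit_subset_symmDiff hB.indep hCx hCy' (by grind) fun a ha => ?_
    simp only [mem_symmDiff, mem_insert_iff] at ha ⊢
    grind

noncomputable def incidenceVec (s : Set α) : α → ZMod 2 := s.indicator 1

lemma incidenceVec_apply_of_mem {s : Set α} {a : α} (h : a ∈ s) : incidenceVec s a = 1 :=
  indicator_of_mem h 1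

lemma incidenceVec_apply_of_notMem {s : Set α} {a : α} (h : a ∉ s) : incidenceVec s a = 0 :=
  indicator_of_notMem h 1

lemma incidenceVec_injective : Function.Injective (incidenceVec (α := α)) :=
  fun _ _ h => indicator_one_inj (ZMod 2) h

lemma incidenceVec_symmDiff (s t : Set α) :
    incidenceVec (s ∆ t) = incidenceVec s + incidenceVec t := by
  ext a
  by_cases hs : a ∈ s <;> by_cases ht : a ∈ t <;>
    simp [incidenceVec, hs, ht, mem_symmDiff]
  rfl

lemma FundCircuitExchange.incidenceVec_fundCircuit_exchange (h : FundCircuitExchange M)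
    (hB : M.IsBase B) (hu : u ∈ M.E \ B) (hbu : b ∈ M.fundCircuit u B) (hb : b ≠ u)
    (hy : y ∈ M.E \ B) (hyu : y ≠ u) :
    incidenceVec (M.fundCircuit y (insert u (B \ {b}))) = incidenceVec (M.fundCircuit y B) +
      incidenceVec (M.fundCircuit y B) b • incidenceVec (M.fundCircuit u B) := by
  have hB' := hB.exchange_of_mem_fundCircuit hu hbu hb
  by_cases hby : b ∈ M.fundCircuit y B
  · have hbB : b ∈ B := (M.fundCircuit_subset_insert u B hbu).resolve_left hb
    rw [h hB hbB hu hB' hy hyu hbu hby, incidenceVec_symmDiff, incidenceVec_apply_of_mem hby,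
      one_smul, add_comm]
  · have hsub : M.fundCircuit y B ⊆ insert y (insert u (B \ {b})) := fun a ha => by
      have := M.fundCircuit_subset_insert y B ha
      simp only [mem_insert_iff, mem_sdiff, mem_singleton_iff] at this ⊢
      grind
    rw [← (hB.fundCircuit_isCircuit hy.1 hy.2).eq_fundCircuit_of_subset hB'.indep hsub,
      incidenceVec_apply_of_notMem hby, zero_smul, add_zero]

lemma FundCircuitExchange.incidenceVec_eq_sum_fundCircuit (h : FundCircuitExchange M) (S : Finset α) :
    ∀ ⦃B C⦄, M.IsBase B → M.IsCircuit C → C \ B = S →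
      incidenceVec C = ∑ y ∈ S, incidenceVec (M.fundCircuit y B) := by
  classical
  induction S using Finset.induction_on with
  | empty =>
    intro B C hB hC hCB
    exact absurd (hB.indep.subset (sdiff_eq_empty.1 (by simpa using hCB))) hC.not_indep
  | insert u S hu ih =>
    intro B C hB hC hCB
    have huCB : u ∈ C \ B := by simp [hCB]
    have hSCB : ∀ y ∈ S, y ∈ C \ B ∧ y ≠ u := fun y hy =>
      ⟨by simp [hCB, hy], fun h => hu (h ▸ hy)⟩
    have hu' : u ∈ M.E \ B := ⟨hC.subset_ground huCB.1, huCB.2⟩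
    set A := M.fundCircuit u B
    have hA := hB.fundCircuit_isCircuit hu'.1 hu'.2
    by_cases hAC : A ⊆ C
    · have hCA : C = A := (hA.eq_of_subset_isCircuit hC hAC).symm
      have hS : S = ∅ := Finset.eq_empty_of_forall_notMem fun y hy => by
        have := M.fundCircuit_subset_insert u B (hCA ▸ (hSCB y hy).1.1)
        simp only [mem_insert_iff] at this
        grind
      rw [Finset.sum_insert hu, hS, Finset.sum_empty, add_zero, hCA]
    obtain ⟨b, hbA, hbC⟩ := not_subset.1 hAC
    have hbu : b ≠ u := fun h => hbC (h ▸ huCB.1)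
    have hB' := hB.exchange_of_mem_fundCircuit hu' hbA hbu
    have hCB' : C \ insert u (B \ {b}) = S := by
      ext a
      have := congrArg (a ∈ ·) hCB
      simp only [mem_sdiff, mem_insert_iff, mem_singleton_iff, Finset.coe_insert] at this ⊢
      grind
    have hsum := ih hB' hC hCB'
    rw [Finset.sum_congr rfl fun y hy => h.incidenceVec_fundCircuit_exchange hB hu' hbA hbu
      ⟨hC.subset_ground (hSCB y hy).1.1, (hSCB y hy).1.2⟩ (hSCB y hy).2,
      Finset.sum_add_distrib, ← Finset.sum_smul] at hsum
    -- evaluate at `u`, which lies in `C` and `C(u,B)` but in no `C(y,B)` with `y ∈ S`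
    have hcoeff : ∑ y ∈ S, incidenceVec (M.fundCircuit y B) b = 1 := by
      have hyu : ∀ y ∈ S, incidenceVec (M.fundCircuit y B) u = 0 := fun y hy =>
        incidenceVec_apply_of_notMem fun h => by
          have := M.fundCircuit_subset_insert y B h
          grind
      simpa [incidenceVec_apply_of_mem huCB.1, Finset.sum_apply, Finset.sum_eq_zero hyu,
        incidenceVec_apply_of_mem (M.mem_fundCircuit u B)] using (congrFun hsum u).symm
    rw [hsum, hcoeff, one_smul, Finset.sum_insert hu, add_comm]

lemma FundCircuitExchange.binary [M.Finitary] (h : FundCircuitExchange M) : Binary M := by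
  refine binary_iff.2 fun C₁ C₂ hC₁ hC₂ hne => ?_
  by_contra! hno
  have hI : M.Indep (C₁ ∆ C₂) := (Matroid.indep_iff_forall_subset_not_isCircuit
    (symmDiff_subset_union.trans (union_subset hC₁.subset_ground hC₂.subset_ground))).2
    fun C hsub hC => hno C hC hsub
  obtain ⟨B, hB, hsub⟩ := hI.exists_isBase_superset
  have hdiff : C₁ \ B = C₂ \ B := by
    ext a
    have := @hsub a
    simp only [mem_symmDiff, mem_sdiff] at this ⊢
    tauto
  have hfin : (C₁ \ B).Finite := hC₁.finite.sdiff
  refine hne (incidenceVec_injective ?_)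
  rw [h.incidenceVec_eq_sum_fundCircuit hfin.toFinset hB hC₁ (by simp),
    h.incidenceVec_eq_sum_fundCircuit hfin.toFinset hB hC₂ (by simp [hdiff])]

theorem stmt_14 (M : Matroid α) [M.Finite] :
    Binary M ↔
      ∀ (B Cx Cy Cy' : Set α) (b x y : α), M.IsBase B → b ∈ B → x ∉ B →
        M.IsBase (insert x (B \ {b})) → y ∉ B → y ≠ x →
        IsFundCct M Cx x B → IsFundCct M Cy y B → b ∈ Cx → b ∈ Cy →
        IsFundCct M Cy' y (insert x (B \ {b})) →
        Cy' = symmDiff Cx Cy := by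
  refine ⟨fun hM B Cx Cy Cy' b x y hB hbB hxB hB' hyB hyx hCx hCy hbCx hbCy hCy' => ?_,
    fun h => FundCircuitExchange.binary fun B b x y hB hbB hx hB' hy hyx hbx hby => ?_⟩
  · rw [hCx.eq_fundCircuit hB.indep] at hbCx ⊢
    rw [hCy.eq_fundCircuit hB.indep] at hbCy ⊢
    rw [hCy'.eq_fundCircuit hB'.indep]
    exact hM.fundCircuitExchange hB hbB ⟨hCx.mem_ground, hxB⟩ hB' ⟨hCy.mem_ground, hyB⟩ hyx
      hbCx hbCy
  · exact h B _ _ _ b x y hB hbB hx.2 hB' hy.2 hyx (hB.isFundCct_fundCircuit hx)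
      (hB.isFundCct_fundCircuit hy) hbx hby
      (hB'.isFundCct_fundCircuit ⟨hy.1, by simp [hyx, hy.2]⟩)
end
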